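/- If h is a positive integer divisible by 3, then ν_3(2·C(h,3) + C(h,2)) = ν_3(h) − 1. -/

import Mathlib

/-!
Both `2·C(h,3) + C(h,2)` and `h(h-1)(2h-1)/6` equal `∑_{k<h} k²`, so
`6·(2·C(h,3) + C(h,2)) = h(h-1)(2h-1)`. When `3 ∣ h`, neither `h - 1` nor `2h - 1` is divisible
by `3`, so the right side has the same `3`-adic valuation as `h`, while the factor `6` on the left
contributes exactly one.
-/

theorem six_mul_two_mul_choose_three_add_choose_two (n : ℕ) :
    6 * (2 * n.choose 3 + n.choose 2) = n * (n - 1) * (2 * n - 1) := by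
  obtain _ | _ | m := n
  · rfl
  · rfl
  have h3 := Nat.descFactorial_eq_factorial_mul_choose (m + 2) 3
  have h2 := Nat.descFactorial_eq_factorial_mul_choose (m + 2) 2
  simp only [Nat.descFactorial_succ, Nat.descFactorial_zero, Nat.factorial] at h3 h2
  rw [show 2 * (m + 2) - 1 = 2 * m + 3 by omega, Nat.add_sub_cancel]
  norm_num at h3 h2
  linarith

theorem padicValNat_mul_of_not_dvd {p a b : ℕ} [Fact p.Prime] (ha : a ≠ 0) (hb : ¬p ∣ b) :
    padicValNat p (a * b) = padicValNat p a := by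
  rw [padicValNat.mul ha (by rintro rfl; exact hb (dvd_zero p)),
    padicValNat.eq_zero_of_not_dvd hb, add_zero]

theorem val3_douglas_Sp2_general (h : ℕ) (hdvd : 3 ∣ h) :
    padicValNat 3 (2 * h.choose 3 + h.choose 2) = padicValNat 3 h - 1 := by
  obtain rfl | hh := eq_or_ne h 0
  · rfl -- both sides are `0`: `padicValNat 3 0 = 0` and `0 - 1 = 0` in `ℕ`
  have hfac := six_mul_two_mul_choose_three_add_choose_two h
  set N := 2 * h.choose 3 + h.choose 2
  have hN : N ≠ 0 := by
    have : 0 < h.choose 2 := Nat.choose_pos (by omega)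
    omega
  have hv_left : padicValNat 3 (6 * N) = padicValNat 3 N + 1 := by
    rw [show 6 * N = 3 * (N * 2) by ring, padicValNat_base_mul (by norm_num) (by omega),
      padicValNat_mul_of_not_dvd hN (by norm_num)]
  have hv_right : padicValNat 3 (6 * N) = padicValNat 3 h := by
    rw [hfac, padicValNat_mul_of_not_dvd (mul_ne_zero hh (by omega)) (by omega),
      padicValNat_mul_of_not_dvd hh (by omega)]
  omega

/-- If `h` is a positive integer divisible by `3`, then
`ν_3(2·C(h,3) + C(h,2)) = ν_3(h) − 1`. -/
theorem val3_douglas_Sp2 (h : ℕ) (hpos : 0 < h) (hdvd : 3 ∣ h) :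
    padicValNat 3 (2 * h.choose 3 + h.choose 2) = padicValNat 3 h - 1 :=
  val3_douglas_Sp2_general h hdvd
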